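/- Let ζ : ℝᵖ → ℝⁿ, let Θ ⊆ ℝᵖ be closed with K = ζ(Θ) closed, and fix y ∈ ℝⁿ. Assume: (i) the metric projection of y onto K is unique with pr(y) = ζ(β̂) for some β̂ ∈ Θ; (ii) ζ is C² in a neighborhood of β̂; (iii) ζ : Θ → K is open at β̂ (for every neighborhood V of β̂ in ℝᵖ there is a neighborhood U of pr(y) in ℝⁿ with U ∩ K ⊆ ζ(V ∩ Θ)); (iv) β̂ is in the interior of Θ; and (v) the p × p matrix J given by J_{kl} = G_{kl} − Σᵢ (yᵢ − ζᵢ(β̂)) ∂ₖ∂ₗζᵢ(β̂) has full rank p, where G_{kl} = Σᵢ ∂ₖζᵢ(β̂) ∂ₗζᵢ(β̂). Then the metric projection pr is differentiable at y in the extended sense and its divergence equals ∇·pr(y) = tr(J^{−1} G). -/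

import Mathlib

open MeasureTheory Metric Asymptotics Filter
open scoped Topology

/-- The set of points whose metric projection onto `K` is unique. -/
def uniqSet (n : ℕ) (K : Set (EuclideanSpace ℝ (Fin n))) : Set (EuclideanSpace ℝ (Fin n)) :=
  {y | ∃! x, x ∈ K ∧ dist y x = infDist y K}

/-- Differentiability at `y` in the extended sense relative to `D`, with derivative `A`. -/
def DiffExtended {n : ℕ} (D : Set (EuclideanSpace ℝ (Fin n)))
    (f : EuclideanSpace ℝ (Fin n) → EuclideanSpace ℝ (Fin n))
    (y : EuclideanSpace ℝ (Fin n))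
    (A : EuclideanSpace ℝ (Fin n) →L[ℝ] EuclideanSpace ℝ (Fin n)) : Prop :=
  y ∈ D ∧ ∃ N ∈ 𝓝 y, volume (N \ D) = 0 ∧
    (fun x => f x - f y - A (x - y)) =o[𝓝[D ∩ N] y] fun x => x - y

/-!
For `x` near `y`, a nearest point of `x` in `K` is `ζ β` with `β` near `β̂` (nearest points vary
continuously where the projection is unique, and `ζ` is open at `β̂`); such a `β` is interior,
hence a zero of the least-squares gradient `F (x, β) = ⟪ζ β - x, Dζ(β) ·⟫`. The `β`-derivative of
`F` at `(y, β̂)` is the bilinear form with matrix `J`, so by the implicit function theorem these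
zeros form the graph of a `C¹` map `g`: near `y` the projection is unique and `pr = ζ ∘ g`.
Differentiating `F (x, g x) = 0` gives `Jᵀ Dg(y) = Lᵀ` for `L = Dζ(β̂)`, whence
`∇·pr(y) = tr (L Dg(y)) = tr (Dg(y) L) = tr (J⁻¹ G)`.
-/

open scoped RealInnerProductSpace Matrix

theorem eventually_nearest_mem {α : Type*} [PseudoMetricSpace α] [ProperSpace α] {K : Set α}
    (hK : IsClosed K) {y z₀ : α} (hy : ∀ z ∈ K, dist y z = infDist y K → z = z₀)
    {U : Set α} (hU : U ∈ 𝓝 z₀) :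
    ∀ᶠ x in 𝓝 y, ∀ z ∈ K, dist x z = infDist x K → z ∈ U := by
  obtain ⟨ε, hε, hεU⟩ := Metric.mem_nhds_iff.1 hU
  set S := (K ∩ closedBall y (infDist y K + 2)) \ ball z₀ ε
  have hS : IsCompact S := ((isCompact_closedBall _ _).inter_left hK).diff isOpen_ball
  have hfar : ∀ z ∈ S, infDist y K < dist y z := fun z hz =>
    (infDist_le_dist_of_mem hz.1.1).lt_of_ne fun h =>
      hz.2 (by rw [hy z hz.1.1 h.symm]; exact mem_ball_self hε)
  obtain ⟨a, ha, haS⟩ :=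
    hS.exists_forall_le' (f := dist y) (continuous_const.dist continuous_id).continuousOn hfar
  filter_upwards [ball_mem_nhds y (lt_min one_pos (half_pos (sub_pos.2 ha)))] with x hx z hzK hz
  have hxy := lt_min_iff.1 (mem_ball.1 hx)
  have hyz : dist y z ≤ infDist y K + 2 * dist x y :=
    calc dist y z ≤ dist x y + dist x z := dist_triangle_left y z x
      _ ≤ dist x y + (infDist y K + dist x y) := by
        rw [hz]; gcongr; exact infDist_le_infDist_add_dist
      _ = infDist y K + 2 * dist x y := by ring
  refine hεU (by_contra fun hzU => ?_)
  have := haS z ⟨⟨hzK, mem_closedBall'.2 (by linarith)⟩, hzU⟩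
  linarith

theorem isLocalMin_dist_of_mem_interior {X Y : Type*} [TopologicalSpace X] [PseudoMetricSpace Y]
    {ζ : X → Y} {Θ : Set X} {K : Set Y} (hK : K = ζ '' Θ) {x : Y} {a : X} (ha : a ∈ interior Θ)
    (hx : dist x (ζ a) = infDist x K) : IsLocalMin (fun b => dist x (ζ b)) a := by
  filter_upwards [isOpen_interior.mem_nhds ha] with b hb
  rw [hx]
  exact infDist_le_dist_of_mem (hK ▸ Set.mem_image_of_mem ζ (interior_subset hb))

section LeastSquares

variable {E H : Type*} [NormedAddCommGroup E] [NormedSpace ℝ E]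
  [NormedAddCommGroup H] [InnerProductSpace ℝ H] {ζ : E → H} {x : H} {β : E}

noncomputable def leastSquaresGrad (ζ : E → H) (q : H × E) : E →L[ℝ] ℝ :=
  innerSL ℝ (ζ q.2 - q.1) ∘L fderiv ℝ ζ q.2

theorem IsLocalMin.leastSquaresGrad_eq_zero (hmin : IsLocalMin (fun b => dist x (ζ b)) β)
    (hζ : DifferentiableAt ℝ ζ β) : leastSquaresGrad ζ (x, β) = 0 := by
  have hsq : IsLocalMin (fun b => ‖ζ b - x‖ ^ 2) β := by
    filter_upwards [hmin] with b hb
    simp only [dist_comm x, dist_eq_norm] at hb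
    gcongr
  have := hsq.hasFDerivAt_eq_zero (hζ.hasFDerivAt.sub_const x).norm_sq
  ext v
  simpa [leastSquaresGrad] using congr($this v)

theorem contDiffAt_leastSquaresGrad (hζ : ContDiffAt ℝ 2 ζ β) :
    ContDiffAt ℝ 1 (leastSquaresGrad ζ) (x, β) := by
  have hζ' : ContDiffAt ℝ 1 (fun q : H × E => ζ q.2) (x, β) :=
    (hζ.of_le one_le_two).comp _ contDiffAt_snd
  have hDζ : ContDiffAt ℝ 1 (fun q : H × E => fderiv ℝ ζ q.2) (x, β) :=
    (hζ.fderiv_right le_rfl).comp _ contDiffAt_snd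
  exact ((innerSL ℝ).contDiff.contDiffAt.comp _ (hζ'.sub contDiffAt_fst)).clm_comp hDζ

theorem fderiv_leastSquaresGrad_apply (hζ : ContDiffAt ℝ 2 ζ β) (u : H) (v w : E) :
    fderiv ℝ (leastSquaresGrad ζ) (x, β) (u, v) w =
      ⟪fderiv ℝ ζ β v - u, fderiv ℝ ζ β w⟫ + ⟪ζ β - x, fderiv ℝ (fderiv ℝ ζ) β v w⟫ := by
  have hL : HasFDerivAt ζ (fderiv ℝ ζ β) β :=
    (hζ.differentiableAt two_ne_zero).hasFDerivAt
  have hD2 : HasFDerivAt (fderiv ℝ ζ) (fderiv ℝ (fderiv ℝ ζ) β) β :=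
    ((hζ.fderiv_right le_rfl).differentiableAt one_ne_zero).hasFDerivAt
  have hF : HasFDerivAt (leastSquaresGrad ζ) _ (x, β) := ((innerSL ℝ).hasFDerivAt.comp (x, β)
    ((hL.comp (x, β) hasFDerivAt_snd).sub hasFDerivAt_fst)).clm_comp
    (hD2.comp (x, β) hasFDerivAt_snd)
  rw [hF.fderiv]
  simp [inner_sub_left]
  -- equal up to `add_comm`, as `innerSL ℝ a b` is `⟪a, b⟫` by definition
  exact add_comm _ _

variable {Θ : Set E} {K : Set H}

theorem eventually_nearest_eq_of_leastSquaresGrad_eq_zero [ProperSpace H]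
    (hK : K = ζ '' Θ) (hKcl : IsClosed K) {y : H} {β₀ : E}
    (hy : ∀ z ∈ K, dist y z = infDist y K → z = ζ β₀)
    (hopen : ∀ V ∈ 𝓝 β₀, ∃ U ∈ 𝓝 (ζ β₀), U ∩ K ⊆ ζ '' (V ∩ Θ))
    (hint : β₀ ∈ interior Θ) (hdiff : ∀ᶠ b in 𝓝 β₀, DifferentiableAt ℝ ζ b)
    {g : H → E} (hg : ∀ᶠ q in 𝓝 (y, β₀), leastSquaresGrad ζ q = 0 → g q.1 = q.2) :
    ∀ᶠ x in 𝓝 y, ∀ z ∈ K, dist x z = infDist x K → z = ζ (g x) := by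
  rw [nhds_prod_eq] at hg
  obtain ⟨P, hP, Q, hQ, hPQ⟩ := eventually_prod_iff.1 hg
  obtain ⟨U, hU, hUK⟩ := hopen _ (hQ.and ((isOpen_interior.eventually_mem hint).and hdiff))
  filter_upwards [hP, eventually_nearest_mem hKcl hy hU] with x hPx hxU z hzK hz
  obtain ⟨β, ⟨⟨hQβ, hβint, hβdiff⟩, -⟩, rfl⟩ := hUK ⟨hxU z hzK hz, hzK⟩
  have hmin := isLocalMin_dist_of_mem_interior hK hβint hz
  rw [hPQ hPx hQβ (hmin.leastSquaresGrad_eq_zero hβdiff)]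

end LeastSquares

theorem Matrix.isUnit_of_rank_eq_card {K n : Type*} [Field K] [Fintype n] [DecidableEq n]
    {A : Matrix n n K} (hA : A.rank = Fintype.card n) : IsUnit A := by
  rw [← Matrix.mulVec_surjective_iff_isUnit, ← Matrix.coe_mulVecLin, ← LinearMap.range_eq_top]
  apply Submodule.eq_top_of_finrank_eq
  rw [← Matrix.rank, hA, Module.finrank_fintype_fun_eq_card]

theorem finrank_strongDual {E : Type*} [NormedAddCommGroup E] [NormedSpace ℝ E]
    [FiniteDimensional ℝ E] : Module.finrank ℝ (StrongDual ℝ E) = Module.finrank ℝ E := by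
  rw [← LinearMap.toContinuousLinearMap.finrank_eq, Subspace.dual_finrank_eq]

namespace EuclideanSpace

variable {m p : ℕ}

theorem map_eq_sum_single {M F : Type*} [AddCommMonoid M] [Module ℝ M]
    [FunLike F (EuclideanSpace ℝ (Fin p)) M] [LinearMapClass F ℝ (EuclideanSpace ℝ (Fin p)) M]
    (f : F) (v : EuclideanSpace ℝ (Fin p)) :
    f v = ∑ k, v k • f (single k 1) := by
  conv_lhs => rw [← (basisFun (Fin p) ℝ).sum_repr v]
  simp [map_sum, map_smul]

section BilinearForm

variable {B : EuclideanSpace ℝ (Fin p) →L[ℝ] EuclideanSpace ℝ (Fin p) →L[ℝ] ℝ}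
  {J : Matrix (Fin p) (Fin p) ℝ}

theorem apply_single_eq_vecMul (hB : ∀ k l, B (single k 1) (single l 1) = J k l)
    (v : EuclideanSpace ℝ (Fin p)) (l : Fin p) :
    B v (single l 1) = (WithLp.ofLp v ᵥ* J) l := by
  simp [map_eq_sum_single B v, Matrix.vecMul, dotProduct, hB]

theorem ofLp_eq_vecMul_inv (hB : ∀ k l, B (single k 1) (single l 1) = J k l) (hJ : IsUnit J)
    {v : EuclideanSpace ℝ (Fin p)} {c : Fin p → ℝ} (h : ∀ l, B v (single l 1) = c l) :
    WithLp.ofLp v = c ᵥ* J⁻¹ := by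
  have hvJ : WithLp.ofLp v ᵥ* J = c :=
    funext fun l => (apply_single_eq_vecMul hB v l).symm.trans (h l)
  rw [← hvJ, Matrix.vecMul_vecMul,
    Matrix.mul_nonsing_inv _ ((Matrix.isUnit_iff_isUnit_det J).1 hJ), Matrix.vecMul_one]

theorem isInvertible_of_apply_single (hB : ∀ k l, B (single k 1) (single l 1) = J k l)
    (hJ : IsUnit J) : B.IsInvertible := by
  have hinj : Function.Injective B := by
    refine (injective_iff_map_eq_zero B).2 fun v hv => ?_
    simpa using ofLp_eq_vecMul_inv hB hJ (v := v) (c := 0) (by simp [hv])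
  have hsurj := (LinearMap.injective_iff_surjective_of_finrank_eq_finrank (f := B.toLinearMap)
    finrank_strongDual.symm).1 hinj
  exact ⟨(LinearEquiv.ofBijective B.toLinearMap ⟨hinj, hsurj⟩).toContinuousLinearEquiv, rfl⟩

end BilinearForm

theorem sum_apply_single_eq_trace (f : EuclideanSpace ℝ (Fin m) →ₗ[ℝ] EuclideanSpace ℝ (Fin m)) :
    ∑ i, f (single i 1) i = LinearMap.trace ℝ _ f := by
  simp [LinearMap.trace_eq_sum_inner f (basisFun (Fin m) ℝ), inner_single_left]

theorem sum_comp_apply_single_eq_trace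
    {L : EuclideanSpace ℝ (Fin p) →L[ℝ] EuclideanSpace ℝ (Fin m)}
    {D : EuclideanSpace ℝ (Fin m) →L[ℝ] EuclideanSpace ℝ (Fin p)} {G M : Matrix (Fin p) (Fin p) ℝ}
    (hG : ∀ k l, G k l = ⟪L (single k 1), L (single l 1)⟫)
    (hD : ∀ u, WithLp.ofLp (D u) = (fun l => ⟪u, L (single l 1)⟫) ᵥ* M) :
    ∑ i, L (D (single i 1)) i = (M * G).trace :=
  calc ∑ i, L (D (single i 1)) i = LinearMap.trace ℝ _ (L.toLinearMap ∘ₗ D.toLinearMap) :=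
        sum_apply_single_eq_trace (L.toLinearMap ∘ₗ D.toLinearMap)
    _ = LinearMap.trace ℝ _ (D.toLinearMap ∘ₗ L.toLinearMap) := LinearMap.trace_comp_comm' _ _
    _ = ∑ k, D (L (single k 1)) k :=
        (sum_apply_single_eq_trace (D.toLinearMap ∘ₗ L.toLinearMap)).symm
    _ = (G * M).trace := by simp [hD, Matrix.trace, Matrix.vecMul, dotProduct, Matrix.mul_apply, hG]
    _ = (M * G).trace := Matrix.trace_mul_comm G M

end EuclideanSpace

section NormalEquations

open EuclideanSpace

variable {p n : ℕ}

theorem fderiv_leastSquaresGrad_single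
    {ζ : EuclideanSpace ℝ (Fin p) → EuclideanSpace ℝ (Fin n)} {y : EuclideanSpace ℝ (Fin n)}
    {β : EuclideanSpace ℝ (Fin p)} (hζ : ContDiffAt ℝ 2 ζ β) (k l : Fin p) :
    fderiv ℝ (leastSquaresGrad ζ) (y, β) (0, single k 1) (single l 1) =
      ∑ i, fderiv ℝ ζ β (single k 1) i * fderiv ℝ ζ β (single l 1) i -
        ∑ i, (y i - ζ β i) * fderiv ℝ (fun b => fderiv ℝ ζ b (single l 1)) β (single k 1) i := by
  rw [fderiv_leastSquaresGrad_apply hζ, fderiv_clm_apply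
    ((hζ.fderiv_right le_rfl).differentiableAt one_ne_zero) (differentiableAt_const _)]
  simp only [PiLp.inner_apply, ← Finset.sum_sub_distrib, ← Finset.sum_add_distrib]
  refine Finset.sum_congr rfl fun i _ => ?_
  simp
  ring

theorem exists_implicitFunction_leastSquaresGrad
    {ζ : EuclideanSpace ℝ (Fin p) → EuclideanSpace ℝ (Fin n)} {y : EuclideanSpace ℝ (Fin n)}
    {β : EuclideanSpace ℝ (Fin p)} {J : Matrix (Fin p) (Fin p) ℝ} (hζ : ContDiffAt ℝ 2 ζ β)
    (hJ : ∀ k l, fderiv ℝ (leastSquaresGrad ζ) (y, β) (0, single k 1) (single l 1) = J k l)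
    (hJunit : IsUnit J) (h0 : leastSquaresGrad ζ (y, β) = 0) :
    ∃ (g : EuclideanSpace ℝ (Fin n) → EuclideanSpace ℝ (Fin p))
      (Dg : EuclideanSpace ℝ (Fin n) →L[ℝ] EuclideanSpace ℝ (Fin p)),
      g y = β ∧ HasFDerivAt g Dg y ∧
      (∀ᶠ q in 𝓝 (y, β), leastSquaresGrad ζ q = 0 → g q.1 = q.2) ∧
      ∀ u, WithLp.ofLp (Dg u) = (fun l => ⟪u, fderiv ℝ ζ β (single l 1)⟫) ᵥ* J⁻¹ := by
  have hf : ContDiffAt ℝ 1 (leastSquaresGrad ζ) (y, β) := contDiffAt_leastSquaresGrad hζ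
  set B := fderiv ℝ (leastSquaresGrad ζ) (y, β) ∘L .inr ℝ _ _
  have hB : B.IsInvertible := isInvertible_of_apply_single hJ hJunit
  refine ⟨hf.implicitFunction one_ne_zero hB, _, hf.implicitFunction_apply_self one_ne_zero hB,
    (hf.hasStrictFDerivAt_implicitFunction one_ne_zero hB).hasFDerivAt, ?_,
    fun u => ofLp_eq_vecMul_inv (B := B) hJ hJunit fun l => ?_⟩
  · filter_upwards [hf.eventually_apply_eq_iff_implicitFunction one_ne_zero hB] with q hq hq0
    exact hq.1 (hq0.trans h0.symm)
  · -- the implicit function theorem gives `Dg = -B⁻¹ ∘ ∂ₓF`, and `∂ₓF u = -⟪u, Dζ(β) ·⟫`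
    change B (-B.inverse (fderiv ℝ (leastSquaresGrad ζ) (y, β) (u, 0))) (single l 1) = _
    simp [hB.self_apply_inverse, fderiv_leastSquaresGrad_apply hζ]

end NormalEquations

theorem diffExtended_of_hasFDerivAt {n : ℕ} {D : Set (EuclideanSpace ℝ (Fin n))}
    {f : EuclideanSpace ℝ (Fin n) → EuclideanSpace ℝ (Fin n)} {y : EuclideanSpace ℝ (Fin n)}
    {A : EuclideanSpace ℝ (Fin n) →L[ℝ] EuclideanSpace ℝ (Fin n)} (hD : D ∈ 𝓝 y)
    (hf : HasFDerivAt f A y) : DiffExtended D f y A :=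
  ⟨mem_of_mem_nhds hD, D, hD, by simp, hf.isLittleO.mono nhdsWithin_le_nhds⟩

theorem divergence_formula_smooth_general
    (p n : ℕ)
    (ζ : EuclideanSpace ℝ (Fin p) → EuclideanSpace ℝ (Fin n))
    (Θ : Set (EuclideanSpace ℝ (Fin p)))
    (K : Set (EuclideanSpace ℝ (Fin n))) (hK : K = ζ '' Θ) (hKcl : IsClosed K)
    (y : EuclideanSpace ℝ (Fin n))
    (pr : EuclideanSpace ℝ (Fin n) → EuclideanSpace ℝ (Fin n))
    (hsel : ∀ z, pr z ∈ K ∧ dist z (pr z) = infDist z K)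
    (βh : EuclideanSpace ℝ (Fin p))
    -- (i) the metric projection of `y` onto `K` is unique, with `pr y = ζ β̂`
    (huniq : ∃! x, x ∈ K ∧ dist y x = infDist y K)
    (hpry : pr y = ζ βh)
    -- (ii) `ζ` is `C²` in a neighborhood of `β̂`
    (hC2 : ContDiffAt ℝ 2 ζ βh)
    -- (iii) `ζ : Θ → K` is open at `β̂`
    (hopen : ∀ V ∈ 𝓝 βh, ∃ U ∈ 𝓝 (pr y), U ∩ K ⊆ ζ '' (V ∩ Θ))
    -- (iv) `β̂` is in the interior of `Θ`
    (hint : βh ∈ interior Θ)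
    -- the matrices `G` and `J`
    (G J : Matrix (Fin p) (Fin p) ℝ)
    (hG : ∀ k l, G k l =
      ∑ i : Fin n, fderiv ℝ ζ βh (EuclideanSpace.single k 1) i *
        fderiv ℝ ζ βh (EuclideanSpace.single l 1) i)
    (hJ : ∀ k l, J k l = G k l -
      ∑ i : Fin n, (y i - ζ βh i) *
        fderiv ℝ (fun b => fderiv ℝ ζ b (EuclideanSpace.single l 1)) βh
          (EuclideanSpace.single k 1) i)
    -- (v) `J` has full rank `p`
    (hrank : J.rank = p) :
    ∃ A : EuclideanSpace ℝ (Fin n) →L[ℝ] EuclideanSpace ℝ (Fin n),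
      DiffExtended (uniqSet n K) pr y A ∧
      (∑ i : Fin n, A (EuclideanSpace.single i 1) i) = Matrix.trace (J⁻¹ * G) := by
  have hJunit : IsUnit J := Matrix.isUnit_of_rank_eq_card (by rw [hrank, Fintype.card_fin])
  have hf0 : leastSquaresGrad ζ (y, βh) = 0 := (isLocalMin_dist_of_mem_interior hK hint
    (hpry ▸ (hsel y).2)).leastSquaresGrad_eq_zero (hC2.differentiableAt two_ne_zero)
  obtain ⟨g, Dg, hgy, hg, hg_unique, hDg⟩ :=
    exists_implicitFunction_leastSquaresGrad hC2 (fun k l => by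
      rw [hJ, hG]; exact fderiv_leastSquaresGrad_single hC2 k l) hJunit hf0
  have hy : ∀ z ∈ K, dist y z = infDist y K → z = ζ βh := fun z hz hzd =>
    huniq.unique ⟨hz, hzd⟩ (hpry ▸ hsel y)
  have hnear := eventually_nearest_eq_of_leastSquaresGrad_eq_zero hK hKcl hy (hpry ▸ hopen) hint
    ((hC2.eventually (by simp)).mono fun b hb => hb.differentiableAt two_ne_zero) hg_unique
  have hD : uniqSet n K ∈ 𝓝 y := by
    filter_upwards [hnear] with x hx
    exact ⟨pr x, hsel x, fun z hz => (hx z hz.1 hz.2).trans (hx _ (hsel x).1 (hsel x).2).symm⟩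
  have hpr : pr =ᶠ[𝓝 y] ζ ∘ g := by
    filter_upwards [hnear] with x hx using hx _ (hsel x).1 (hsel x).2
  have hζ : HasFDerivAt ζ (fderiv ℝ ζ βh) (g y) :=
    hgy ▸ (hC2.differentiableAt two_ne_zero).hasFDerivAt
  refine ⟨_, diffExtended_of_hasFDerivAt hD ((hζ.comp y hg).congr_of_eventuallyEq hpr),
    EuclideanSpace.sum_comp_apply_single_eq_trace (fun k l => ?_) hDg⟩
  simp [hG, PiLp.inner_apply, mul_comm]

/-- **Divergence formula for smooth nonlinear least squares, interior case.**
With `K = ζ(Θ)` closed, the projection of `y` unique and equal to `ζ(β̂)`, `ζ` being `C²`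
near `β̂` and open at `β̂`, `β̂` interior to `Θ` and the matrix `J` of full rank `p`, the
metric projection is differentiable at `y` in the extended sense and its divergence equals
`∇·pr(y) = tr(J⁻¹ G)`. -/
theorem divergence_formula_smooth
    (p n : ℕ)
    (ζ : EuclideanSpace ℝ (Fin p) → EuclideanSpace ℝ (Fin n))
    (Θ : Set (EuclideanSpace ℝ (Fin p))) (hΘ : IsClosed Θ)
    (K : Set (EuclideanSpace ℝ (Fin n))) (hK : K = ζ '' Θ) (hKcl : IsClosed K)
    (y : EuclideanSpace ℝ (Fin n))
    (pr : EuclideanSpace ℝ (Fin n) → EuclideanSpace ℝ (Fin n))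
    (hsel : ∀ z, pr z ∈ K ∧ dist z (pr z) = infDist z K)
    (βh : EuclideanSpace ℝ (Fin p)) (hβΘ : βh ∈ Θ)
    -- (i) the metric projection of `y` onto `K` is unique, with `pr y = ζ β̂`
    (huniq : ∃! x, x ∈ K ∧ dist y x = infDist y K)
    (hpry : pr y = ζ βh)
    -- (ii) `ζ` is `C²` in a neighborhood of `β̂`
    (hC2 : ContDiffAt ℝ 2 ζ βh)
    -- (iii) `ζ : Θ → K` is open at `β̂`
    (hopen : ∀ V ∈ 𝓝 βh, ∃ U ∈ 𝓝 (pr y), U ∩ K ⊆ ζ '' (V ∩ Θ))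
    -- (iv) `β̂` is in the interior of `Θ`
    (hint : βh ∈ interior Θ)
    -- the matrices `G` and `J`
    (G J : Matrix (Fin p) (Fin p) ℝ)
    (hG : ∀ k l, G k l =
      ∑ i : Fin n, fderiv ℝ ζ βh (EuclideanSpace.single k 1) i *
        fderiv ℝ ζ βh (EuclideanSpace.single l 1) i)
    (hJ : ∀ k l, J k l = G k l -
      ∑ i : Fin n, (y i - ζ βh i) *
        fderiv ℝ (fun b => fderiv ℝ ζ b (EuclideanSpace.single l 1)) βh
          (EuclideanSpace.single k 1) i)
    -- (v) `J` has full rank `p`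
    (hrank : J.rank = p) :
    ∃ A : EuclideanSpace ℝ (Fin n) →L[ℝ] EuclideanSpace ℝ (Fin n),
      DiffExtended (uniqSet n K) pr y A ∧
      (∑ i : Fin n, A (EuclideanSpace.single i 1) i) = Matrix.trace (J⁻¹ * G) :=
  divergence_formula_smooth_general p n ζ Θ K hK hKcl y pr hsel βh huniq hpry hC2 hopen hint G J hG
    hJ hrank
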